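/- Let x ∈ ℝⁿ with g(x) < ∞, let B be a symmetric positive semidefinite n×n matrix with ‖B‖ ≤ M, let α > 0, H = B + αI, ν ∈ [0,1), θ, γ ∈ (0,1). Define q(y) = f(x) + ⟨∇f(x), y − x⟩ + ½⟨y − x, H(y − x)⟩ + g(y). Suppose x̂ ∈ ℝⁿ satisfies q(x̂) ≤ q(x) and the residual e = x̂ − Prox_g(x̂ − ∇f(x) − H(x̂ − x)) satisfies ‖e‖ ≤ ν‖𝒢(x)‖. Set d = x̂ − x and let t > 0 satisfy t ≥ γ(1−θ)α/L₁ and F(x + td) ≤ F(x) − (θαt/2)‖d‖². Then F(x + td) − F(x) ≤ −(γθ(1−θ)/(2L₁)) · ((1−ν)α/(1+M+α))² · ‖𝒢(x)‖². -/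

import Mathlib

open scoped RealInnerProductSpace
open Metric Set Filter

noncomputable section

abbrev En (n : ℕ) : Type := EuclideanSpace ℝ (Fin n)

/-- Convex subdifferential of an extended-real-valued function `g` at `x`. -/
def ESubdiff {n : ℕ} (g : En n → EReal) (x : En n) : Set (En n) :=
  {v | ∀ y, g x + ((⟪v, y - x⟫ : ℝ) : EReal) ≤ g y}

/-- `g` is proper: it never takes the value `-∞` and is finite somewhere. -/
def ProperFun {n : ℕ} (g : En n → EReal) : Prop :=
  (∀ x, g x ≠ ⊥) ∧ ∃ x, g x ≠ ⊤

/-- Convexity for extended-real-valued functions. -/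
def EConvexOn {n : ℕ} (g : En n → EReal) : Prop :=
  ∀ x y : En n, ∀ a b : ℝ, 0 ≤ a → 0 ≤ b → a + b = 1 →
    g (a • x + b • y) ≤ (a : EReal) * g x + (b : EReal) * g y

/-- `p` minimizes `y ↦ g y + ‖y - u‖ ^ 2 / 2`. -/
def IsProxPt {n : ℕ} (g : En n → EReal) (u p : En n) : Prop :=
  ∀ y, g p + ((‖p - u‖ ^ 2 / 2 : ℝ) : EReal) ≤ g y + ((‖y - u‖ ^ 2 / 2 : ℝ) : EReal)

/-- `prox` maps each `u` to the unique minimizer of `y ↦ g y + ‖y - u‖ ^ 2 / 2`. -/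
def IsProxMap {n : ℕ} (g : En n → EReal) (prox : En n → En n) : Prop :=
  ∀ u, IsProxPt g u (prox u) ∧ ∀ p, IsProxPt g u p → p = prox u

/-- The solution set `𝒳* = argmin (f + g)`. -/
def ArgminSet {n : ℕ} (f : En n → ℝ) (g : En n → EReal) : Set (En n) :=
  {x | ∀ y, (f x : EReal) + g x ≤ (f y : EReal) + g y}

/-- The prox-gradient mapping `𝒢 x = x - Prox_g (x - ∇f x)`. -/
def Gmap {n : ℕ} (f' prox : En n → En n) (x : En n) : En n :=
  x - prox (x - f' x)

/-!
The exact prox-gradient point `Prox_g (x - ∇f x)` and the inexact point `x̂ - e` are both proximal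
points of `g`, at arguments that differ by `H d - d`. Since `u - Prox_g u` is a subgradient of `g`
at `Prox_g u`, the prox map is firmly nonexpansive; together with `⟪d, H d⟫ ≥ 0` this bounds
`‖𝒢 x - e‖` by `‖d + H d‖ ≤ (1 + M + α) ‖d‖`, hence `(1 - ν) ‖𝒢 x‖ ≤ (1 + M + α) ‖d‖`.
The lower bound on `t` turns the line-search decrease `θ α t ‖d‖² / 2` into the claimed
multiple of `‖𝒢 x‖²`.
-/

open Topology

theorem norm_le_of_norm_sq_le_neg_inner {E : Type*} [NormedAddCommGroup E] [InnerProductSpace ℝ E]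
    {w v : E} (h : ‖w‖ ^ 2 ≤ -⟪w, v⟫) : ‖w‖ ≤ ‖v‖ := by
  have hcs : -⟪w, v⟫ ≤ ‖w‖ * ‖v‖ := (neg_le_abs _).trans (abs_real_inner_le_norm w v)
  nlinarith [norm_nonneg w, norm_nonneg v]

theorem norm_le_of_norm_add_sq_le_inner {E : Type*} [NormedAddCommGroup E]
    [InnerProductSpace ℝ E] {w d h : E} (hdh : 0 ≤ ⟪d, h⟫)
    (hfirm : ‖w + d‖ ^ 2 ≤ ⟪w + d, d - h⟫) : ‖w‖ ≤ ‖d + h‖ := by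
  apply norm_le_of_norm_sq_le_neg_inner
  rw [norm_add_sq_real, inner_add_left, inner_sub_right, inner_sub_right,
    real_inner_self_eq_norm_sq] at hfirm
  rw [inner_add_right]
  linarith

variable {n : ℕ} {g : En n → EReal}

theorem ProperFun.exists_eq_coe (hg : ProperFun g) {x : En n} (hx : g x ≠ ⊤) :
    ∃ r : ℝ, g x = r :=
  ⟨_, (EReal.coe_toReal hx (hg.1 x)).symm⟩

theorem inner_sub_nonneg_of_mem_eSubdiff (hg : ProperFun g) {a b v₁ v₂ : En n}
    (ha : g a ≠ ⊤) (hb : g b ≠ ⊤) (hv₁ : v₁ ∈ ESubdiff g a) (hv₂ : v₂ ∈ ESubdiff g b) :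
    0 ≤ ⟪v₁ - v₂, a - b⟫ := by
  obtain ⟨ra, hra⟩ := hg.exists_eq_coe ha
  obtain ⟨rb, hrb⟩ := hg.exists_eq_coe hb
  have h₁ := hv₁ b
  have h₂ := hv₂ a
  rw [hra, hrb] at h₁ h₂
  norm_cast at h₁ h₂
  rw [← neg_sub a b, inner_neg_right] at h₁
  rw [inner_sub_left]
  linarith

namespace IsProxPt

variable {u p : En n}

theorem ne_top (hg : ProperFun g) (hp : IsProxPt g u p) : g p ≠ ⊤ := by
  obtain ⟨y, hy⟩ := hg.2
  obtain ⟨r, hr⟩ := hg.exists_eq_coe hy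
  intro htop
  have h := hp y
  rw [htop, EReal.top_add_coe, top_le_iff, hr, ← EReal.coe_add] at h
  exact EReal.coe_ne_top _ h

theorem le_add_inner_add_sq (hgc : EConvexOn g) (hp : IsProxPt g u p) {q : En n} {gp gq t : ℝ}
    (hgp : g p = gp) (hgq : g q = gq) (ht0 : 0 < t) (ht1 : t ≤ 1) :
    gp ≤ gq + ⟪p - u, q - p⟫ + t / 2 * ‖q - p‖ ^ 2 := by
  have hconv : g (p + t • (q - p)) ≤ (((1 - t) * gp + t * gq : ℝ) : EReal) := by
    have h := hgc p q (1 - t) t (by linarith) ht0.le (by ring)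
    rw [hgp, hgq] at h
    rw [show p + t • (q - p) = (1 - t) • p + t • q by
      rw [smul_sub, sub_smul, one_smul]; abel]
    exact_mod_cast h
  have hmin := (hp (p + t • (q - p))).trans (add_le_add_left hconv _)
  rw [hgp] at hmin
  have hreal : gp + ‖p - u‖ ^ 2 / 2 ≤
      (1 - t) * gp + t * gq + ‖(p - u) + t • (q - p)‖ ^ 2 / 2 := by
    rw [show (p - u) + t • (q - p) = p + t • (q - p) - u by abel]
    exact_mod_cast hmin
  rw [norm_add_sq_real, real_inner_smul_right, norm_smul, mul_pow, Real.norm_eq_abs,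
    sq_abs] at hreal
  refine le_of_mul_le_mul_left ?_ ht0
  linarith

theorem sub_mem_eSubdiff (hg : ProperFun g) (hgc : EConvexOn g) (hp : IsProxPt g u p) :
    u - p ∈ ESubdiff g p := by
  intro q
  by_cases hq : g q = ⊤
  · rw [hq]
    exact le_top
  obtain ⟨gp, hgp⟩ := hg.exists_eq_coe (hp.ne_top hg)
  obtain ⟨gq, hgq⟩ := hg.exists_eq_coe hq
  rw [hgp, hgq, ← neg_sub p u, inner_neg_left]
  suffices gp ≤ gq + ⟪p - u, q - p⟫ by
    exact_mod_cast (by linarith : gp + -⟪p - u, q - p⟫ ≤ gq)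
  have hlim : Tendsto (fun t : ℝ => gq + ⟪p - u, q - p⟫ + t / 2 * ‖q - p‖ ^ 2) (𝓝[>] 0)
      (𝓝 (gq + ⟪p - u, q - p⟫)) := by
    have hcont : Continuous fun t : ℝ => gq + ⟪p - u, q - p⟫ + t / 2 * ‖q - p‖ ^ 2 := by
      fun_prop
    simpa using (hcont.tendsto 0).mono_left nhdsWithin_le_nhds
  exact ge_of_tendsto hlim <| Filter.mem_of_superset (Ioc_mem_nhdsGT one_pos)
    fun t ht => hp.le_add_inner_add_sq hgc hgp hgq ht.1 ht.2

theorem norm_sub_sq_le_inner (hg : ProperFun g) (hgc : EConvexOn g) {u₁ u₂ a b : En n}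
    (ha : IsProxPt g u₁ a) (hb : IsProxPt g u₂ b) : ‖a - b‖ ^ 2 ≤ ⟪a - b, u₁ - u₂⟫ := by
  have h := inner_sub_nonneg_of_mem_eSubdiff hg (ha.ne_top hg) (hb.ne_top hg)
    (ha.sub_mem_eSubdiff hg hgc) (hb.sub_mem_eSubdiff hg hgc)
  rw [show u₁ - a - (u₂ - b) = (u₁ - u₂) - (a - b) by abel, inner_sub_left,
    real_inner_self_eq_norm_sq, real_inner_comm] at h
  linarith

end IsProxPt

theorem norm_sub_sub_prox_sub_le (hg : ProperFun g) (hgc : EConvexOn g)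
    {x xhat v h z p : En n} (hz : IsProxPt g (x - v) z) (hp : IsProxPt g (xhat - v - h) p)
    (hdh : 0 ≤ ⟪xhat - x, h⟫) : ‖(x - z) - (xhat - p)‖ ≤ ‖xhat - x + h‖ := by
  apply norm_le_of_norm_add_sq_le_inner hdh
  have hfirm := hz.norm_sub_sq_le_inner hg hgc hp
  rw [show z - p = -((x - z) - (xhat - p) + (xhat - x)) by abel,
    show x - v - (xhat - v - h) = -((xhat - x) - h) by abel, norm_neg, inner_neg_neg] at hfirm
  exact hfirm

theorem one_sub_mul_norm_gmap_le (hg : ProperFun g) (hgc : EConvexOn g)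
    {f' prox : En n → En n} (hprox : IsProxMap g prox) {B : En n →L[ℝ] En n}
    (hBpsd : ∀ u, 0 ≤ ⟪B u, u⟫) {M α ν : ℝ} (hBM : ‖B‖ ≤ M) (hα : 0 ≤ α) {x xhat : En n}
    (hres : ‖xhat - prox (xhat - f' x - (B (xhat - x) + α • (xhat - x)))‖ ≤
      ν * ‖Gmap f' prox x‖) :
    (1 - ν) * ‖Gmap f' prox x‖ ≤ (1 + M + α) * ‖xhat - x‖ := by
  set d := xhat - x
  have hdH : 0 ≤ ⟪d, B d + α • d⟫ := by
    rw [inner_add_right, real_inner_smul_right, real_inner_comm]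
    exact add_nonneg (hBpsd d) (mul_nonneg hα real_inner_self_nonneg)
  have hw := norm_sub_sub_prox_sub_le hg hgc (hprox (x - f' x)).1 (hprox _).1 hdH
  have hH : ‖d + (B d + α • d)‖ ≤ (1 + M + α) * ‖d‖ :=
    calc ‖d + (B d + α • d)‖ ≤ ‖d‖ + (‖B d‖ + ‖α • d‖) :=
          (norm_add_le _ _).trans (add_le_add_right (norm_add_le _ _) _)
      _ ≤ ‖d‖ + (M * ‖d‖ + α * ‖d‖) := by
          rw [norm_smul, Real.norm_of_nonneg hα]
          gcongr
          exact B.le_of_opNorm_le hBM d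
      _ = (1 + M + α) * ‖d‖ := by ring
  have htri := norm_sub_norm_le (Gmap f' prox x) (xhat - prox (xhat - f' x - (B d + α • d)))
  unfold Gmap at htri hres hw ⊢
  linarith

theorem cost_decrease_estimate_general {n : ℕ}
    (f : En n → ℝ) (f' : En n → En n) (g : En n → EReal) (prox : En n → En n)
    (L₁ : ℝ) (hL₁ : 0 < L₁)
    (hgproper : ProperFun g) (hgconv : EConvexOn g)
    (hprox : IsProxMap g prox)
    (x : En n)
    (B : En n →L[ℝ] En n)
    (hBpsd : ∀ u : En n, 0 ≤ ⟪B u, u⟫)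
    (M : ℝ) (hBM : ‖B‖ ≤ M)
    (α : ℝ) (hα : 0 < α)
    (ν : ℝ) (hν1 : ν < 1)
    (θ γ : ℝ) (hθ0 : 0 < θ) (hθ1 : θ < 1) (hγ0 : 0 < γ)
    (xhat : En n)
    (hres : ‖xhat - prox (xhat - f' x - (B (xhat - x) + α • (xhat - x)))‖ ≤
      ν * ‖Gmap f' prox x‖)
    (t : ℝ) (htlow : γ * (1 - θ) * α / L₁ ≤ t)
    (htdec : (f (x + t • (xhat - x)) : EReal) + g (x + t • (xhat - x)) ≤
      ((f x : EReal) + g x) - ((θ * α * t / 2 * ‖xhat - x‖ ^ 2 : ℝ) : EReal)) :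
    (f (x + t • (xhat - x)) : EReal) + g (x + t • (xhat - x)) ≤
      ((f x : EReal) + g x) -
        ((γ * θ * (1 - θ) / (2 * L₁) * ((1 - ν) * α / (1 + M + α)) ^ 2 *
          ‖Gmap f' prox x‖ ^ 2 : ℝ) : EReal) := by
  set G := Gmap f' prox x
  set d := xhat - x
  have hS : 0 < 1 + M + α := by linarith [(norm_nonneg B).trans hBM]
  have hstep := one_sub_mul_norm_gmap_le hgproper hgconv hprox hBpsd hBM hα.le hres
  have hscaled : (1 - ν) * α / (1 + M + α) * ‖G‖ ≤ α * ‖d‖ := by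
    rw [div_mul_eq_mul_div, div_le_iff₀ hS]
    nlinarith
  have hsq : ((1 - ν) * α / (1 + M + α)) ^ 2 * ‖G‖ ^ 2 ≤ α ^ 2 * ‖d‖ ^ 2 := by
    rw [← mul_pow, ← mul_pow]
    exact pow_le_pow_left₀ (by have := sub_pos.2 hν1; positivity) hscaled 2
  have hc : 0 ≤ γ * θ * (1 - θ) / (2 * L₁) := by have := sub_pos.2 hθ1; positivity
  have hreal : γ * θ * (1 - θ) / (2 * L₁) * ((1 - ν) * α / (1 + M + α)) ^ 2 * ‖G‖ ^ 2 ≤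
      θ * α * t / 2 * ‖d‖ ^ 2 :=
    calc _ ≤ γ * θ * (1 - θ) / (2 * L₁) * (α ^ 2 * ‖d‖ ^ 2) := by
          rw [mul_assoc]; exact mul_le_mul_of_nonneg_left hsq hc
      _ = θ * α / 2 * (γ * (1 - θ) * α / L₁) * ‖d‖ ^ 2 := by field_simp
      _ ≤ θ * α / 2 * t * ‖d‖ ^ 2 := by gcongr
      _ = θ * α * t / 2 * ‖d‖ ^ 2 := by ring
  exact htdec.trans (EReal.sub_le_sub le_rfl (EReal.coe_le_coe_iff.2 hreal))

/-- Under the inexactness condition on the residual and the line search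
conditions on `t`, the cost decreases by at least
`(γθ(1-θ)/(2L₁)) ((1-ν)α/(1+M+α))² ‖𝒢(x)‖²`. -/
theorem cost_decrease_estimate {n : ℕ}
    (f : En n → ℝ) (f' : En n → En n) (g : En n → EReal) (prox : En n → En n)
    (L₁ : ℝ) (hL₁ : 0 < L₁)
    (hfconv : ConvexOn ℝ Set.univ f)
    (hgrad : ∀ x, HasGradientAt f (f' x) x)
    (hgradcont : Continuous f')
    (hlip : ∀ x y : En n, ‖f' x - f' y‖ ≤ L₁ * ‖x - y‖)
    (hgproper : ProperFun g) (hglsc : LowerSemicontinuous g) (hgconv : EConvexOn g)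
    (hprox : IsProxMap g prox)
    (x : En n) (hgx : g x ≠ ⊤)
    (B : En n →L[ℝ] En n)
    (hBsymm : ∀ u v : En n, ⟪B u, v⟫ = ⟪u, B v⟫)
    (hBpsd : ∀ u : En n, 0 ≤ ⟪B u, u⟫)
    (M : ℝ) (hBM : ‖B‖ ≤ M)
    (α : ℝ) (hα : 0 < α)
    (ν : ℝ) (hν0 : 0 ≤ ν) (hν1 : ν < 1)
    (θ γ : ℝ) (hθ0 : 0 < θ) (hθ1 : θ < 1) (hγ0 : 0 < γ) (hγ1 : γ < 1)
    (xhat : En n)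
    (hq : ((f x + ⟪f' x, xhat - x⟫ +
        (⟪xhat - x, B (xhat - x)⟫ + α * ‖xhat - x‖ ^ 2) / 2 : ℝ) : EReal) + g xhat ≤
      (f x : EReal) + g x)
    (hres : ‖xhat - prox (xhat - f' x - (B (xhat - x) + α • (xhat - x)))‖ ≤
      ν * ‖Gmap f' prox x‖)
    (t : ℝ) (ht0 : 0 < t) (htlow : γ * (1 - θ) * α / L₁ ≤ t)
    (htdec : (f (x + t • (xhat - x)) : EReal) + g (x + t • (xhat - x)) ≤
      ((f x : EReal) + g x) - ((θ * α * t / 2 * ‖xhat - x‖ ^ 2 : ℝ) : EReal)) :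
    (f (x + t • (xhat - x)) : EReal) + g (x + t • (xhat - x)) ≤
      ((f x : EReal) + g x) -
        ((γ * θ * (1 - θ) / (2 * L₁) * ((1 - ν) * α / (1 + M + α)) ^ 2 *
          ‖Gmap f' prox x‖ ^ 2 : ℝ) : EReal) :=
  cost_decrease_estimate_general f f' g prox L₁ hL₁ hgproper hgconv hprox x B hBpsd M hBM α hα ν hν1
    θ γ hθ0 hθ1 hγ0 xhat hres t htlow htdec
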